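/- arXiv:2003.02082 — 2 statements merged into one kernel-verified Lean document; each statement's English description precedes it below -/
import Mathlib

section
/- (Jagannathan/Dinkelbach characterization) Let S be a nonempty set, Φ, Ψ : S → ℝ with Ψ(x) > 0 for all x ∈ S, and define P(x) = Φ(x)/Ψ(x). Then x* ∈ S minimizes P over S if and only if x* minimizes the function x ↦ Φ(x) − P(x*)·Ψ(x) over S, and in that case the minimum value of the latter is 0. -/
/-- Jagannathan/Dinkelbach characterization of fractional programming: with `Ψ > 0`,
`x*` minimizes `Φ/Ψ` iff `x*` minimizes `x ↦ Φ(x) − (Φ(x*)/Ψ(x*))·Ψ(x)`, and in that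
case the minimum value of the latter is `0`. -/
theorem dinkelbach_characterization {S : Type*} [Nonempty S] (Φ Ψ : S → ℝ)
    (hΨ : ∀ x, 0 < Ψ x) (xstar : S) :
    ((∀ x, Φ xstar / Ψ xstar ≤ Φ x / Ψ x) ↔
        (∀ x, Φ xstar - (Φ xstar / Ψ xstar) * Ψ xstar
            ≤ Φ x - (Φ xstar / Ψ xstar) * Ψ x)) ∧
      Φ xstar - (Φ xstar / Ψ xstar) * Ψ xstar = 0 := by
  have hz : Φ xstar - (Φ xstar / Ψ xstar) * Ψ xstar = 0 := by
    rw [div_mul_cancel₀ _ (hΨ xstar).ne', sub_self]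
  refine ⟨?_, hz⟩
  have key : ∀ x, (Φ xstar / Ψ xstar ≤ Φ x / Ψ x) ↔
      (0 ≤ Φ x - (Φ xstar / Ψ xstar) * Ψ x) := by
    intro x
    rw [div_le_div_iff₀ (hΨ xstar) (hΨ x), sub_nonneg, div_mul_eq_mul_div,
      div_le_iff₀ (hΨ xstar)]

  constructor
  · intro h x; rw [hz]; exact (key x).mp (h x)
  · intro h x; have h2 := h x; rw [hz] at h2; exact (key x).mpr h2
end

section
/- In the Dinkelbach iteration δ_{k+1} = Φ(x_{k+1})/Ψ(x_{k+1}) where x_{k+1} minimizes Φ(x) − δ_k Ψ(x) over S, the sequence δ_k is nonincreasing: δ_{k+1} ≤ δ_k, with equality if and only if F(δ_k) = 0, where F(δ) = min_x (Φ(x) − δΨ(x)). -/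
section ParametricObjective

variable {K : Type*} [Field K] {a b δ : K}

theorem sub_div_mul_self_eq_zero (hb : b ≠ 0) : a - a / b * b = 0 :=
  sub_eq_zero.2 (div_mul_cancel₀ a hb).symm

theorem div_eq_iff_sub_mul_eq_zero (hb : b ≠ 0) : a / b = δ ↔ a - δ * b = 0 := by
  rw [div_eq_iff hb, sub_eq_zero, mul_comm]

theorem div_le_iff_sub_mul_nonpos [LinearOrder K] [IsStrictOrderedRing K] (hb : 0 < b) :
    a / b ≤ δ ↔ a - δ * b ≤ 0 := by
  rw [div_le_iff₀ hb, sub_nonpos, mul_comm]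

end ParametricObjective

theorem dinkelbach_iteration_monotone_general {S : Type*} (Φ Ψ : S → ℝ)
    (hΨ : ∀ y, 0 < Ψ y) (x x' : S)
    (hmin : ∀ y, Φ x' - (Φ x / Ψ x) * Ψ x' ≤ Φ y - (Φ x / Ψ x) * Ψ y) :
    Φ x' / Ψ x' ≤ Φ x / Ψ x ∧
      (Φ x' / Ψ x' = Φ x / Ψ x ↔ Φ x' - (Φ x / Ψ x) * Ψ x' = 0) := by
  have hF_nonpos : Φ x' - (Φ x / Ψ x) * Ψ x' ≤ 0 :=
    (hmin x).trans_eq (sub_div_mul_self_eq_zero (hΨ x).ne')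
  exact ⟨(div_le_iff_sub_mul_nonpos (hΨ x')).2 hF_nonpos,
    div_eq_iff_sub_mul_eq_zero (hΨ x').ne'⟩

/-- One step of the Dinkelbach iteration: if `δ = Φ(x)/Ψ(x)` and `x'` minimizes
`y ↦ Φ(y) − δΨ(y)`, then `δ' = Φ(x')/Ψ(x') ≤ δ`, with equality iff
`F(δ) = Φ(x') − δΨ(x') = 0`. -/
theorem dinkelbach_iteration_monotone {S : Type*} [Nonempty S] (Φ Ψ : S → ℝ)
    (hΨ : ∀ y, 0 < Ψ y) (x x' : S)
    (hmin : ∀ y, Φ x' - (Φ x / Ψ x) * Ψ x' ≤ Φ y - (Φ x / Ψ x) * Ψ y) :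
    Φ x' / Ψ x' ≤ Φ x / Ψ x ∧
      (Φ x' / Ψ x' = Φ x / Ψ x ↔ Φ x' - (Φ x / Ψ x) * Ψ x' = 0) :=
  dinkelbach_iteration_monotone_general Φ Ψ hΨ x x' hmin
end
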